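/- Define QBER(p) = 49p²/3 − 56p³ + 2380p⁴/27 − 6160p⁵/81 + 8512p⁶/243 − 4824p⁷/729 for p ∈ [0,1]. Then QBER(0.08) < 0.08 and QBER(0.085) > 0.085; consequently, by continuity, there exists p_th ∈ (0.08, 0.085) with QBER(p_th) = p_th. (Existence of the probability threshold p_th ≈ 0.081 of the proposed single-logical-qubit error-correction scheme using six noisy EPR pairs.) -/

import Mathlib

/-- The qubit error ratio of the proposed single-logical-qubit error-correction scheme
using six noisy EPR pairs over quantum depolarizing channels with depolarizing
probability `p`. -/
noncomputable def QBER (p : ℝ) : ℝ :=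
  49*p^2/3 - 56*p^3 + 2380*p^4/27 - 6160*p^5/81 + 8512*p^6/243 - 4824*p^7/729

theorem exists_mem_Ioo_eq_self_of_lt_of_gt {f : ℝ → ℝ} {a b : ℝ} (hab : a ≤ b)
    (hf : ContinuousOn f (Set.Icc a b)) (ha : f a < a) (hb : b < f b) :
    ∃ c ∈ Set.Ioo a b, f c = c := by
  have hg : ContinuousOn (fun x => f x - x) (Set.Icc a b) := hf.sub continuousOn_id
  obtain ⟨c, hc, hgc⟩ := intermediate_value_Ioo hab hg ⟨sub_neg.mpr ha, sub_pos.mpr hb⟩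
  exact ⟨c, hc, sub_eq_zero.mp hgc⟩

theorem continuous_QBER : Continuous QBER := by
  unfold QBER
  fun_prop

/-- `QBER(0.08) < 0.08` and `QBER(0.085) > 0.085`; consequently, by continuity, there is
a probability threshold `p_th ∈ (0.08, 0.085)` with `QBER(p_th) = p_th`. -/
theorem stmt16 :
    QBER 0.08 < 0.08 ∧ QBER 0.085 > 0.085 ∧
    ∃ pth ∈ Set.Ioo (0.08 : ℝ) 0.085, QBER pth = pth := by
  have below : QBER 0.08 < 0.08 := by norm_num [QBER]
  have above : QBER 0.085 > 0.085 := by norm_num [QBER]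
  exact ⟨below, above, exists_mem_Ioo_eq_self_of_lt_of_gt (by norm_num)
    continuous_QBER.continuousOn below above⟩
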